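/- For all HyperLTL sentences φ_ℓ and φ_r over AP, one can effectively construct a HyperLTL sentence ψ over AP ∪ {$} such that for every split set T of traces over AP ∪ {$}: T_ℓ ⊨ φ_ℓ and T_r ⊨ φ_r if and only if T ⊨ ψ. -/

import Mathlib

/-! ### HyperLTL: syntax and semantics -/

/-- A trace over a set `AP` of atomic propositions. -/
abbrev Trace (AP : Type) : Type := ℕ → Set AP

/-- The suffix of a trace from position `j` onwards. -/
def Trace.shift {AP : Type} (t : Trace AP) (j : ℕ) : Trace AP := fun i => t (i + j)

/-- Quantifier-free HyperLTL formulas; trace variables are natural numbers. -/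
inductive QF (AP : Type) : Type where
  | atom : AP → ℕ → QF AP
  | neg  : QF AP → QF AP
  | disj : QF AP → QF AP → QF AP
  | next : QF AP → QF AP
  | untl : QF AP → QF AP → QF AP

/-- HyperLTL formulas: a block of trace quantifiers followed by a
quantifier-free formula (HyperLTL formulas are in prenex normal form). -/
inductive HFormula (AP : Type) : Type where
  | ex  : ℕ → HFormula AP → HFormula AP
  | all : ℕ → HFormula AP → HFormula AP
  | qf  : QF AP → HFormula AP

/-- The simultaneous shift of a trace assignment. -/
def shiftAsg {AP : Type} (As : ℕ → Trace AP) (j : ℕ) : ℕ → Trace AP :=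
  fun x => Trace.shift (As x) j

/-- Semantics of quantifier-free HyperLTL formulas w.r.t. a trace assignment. -/
def QF.sat {AP : Type} : QF AP → (ℕ → Trace AP) → Prop
  | .atom a x, As => a ∈ As x 0
  | .neg ψ, As => ¬ ψ.sat As
  | .disj ψ₁ ψ₂, As => ψ₁.sat As ∨ ψ₂.sat As
  | .next ψ, As => ψ.sat (shiftAsg As 1)
  | .untl ψ₁ ψ₂, As => ∃ j, ψ₂.sat (shiftAsg As j) ∧ ∀ j' < j, ψ₁.sat (shiftAsg As j')

/-- Semantics of HyperLTL formulas w.r.t. a set of traces and a trace assignment. -/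
def HFormula.sat {AP : Type} : HFormula AP → Set (Trace AP) → (ℕ → Trace AP) → Prop
  | .ex x φ, T, As => ∃ t ∈ T, φ.sat T (Function.update As x t)
  | .all x φ, T, As => ∀ t ∈ T, φ.sat T (Function.update As x t)
  | .qf ψ, _, As => ψ.sat As

def QF.freeVars {AP : Type} : QF AP → Set ℕ
  | .atom _ x => {x}
  | .neg ψ => ψ.freeVars
  | .disj ψ₁ ψ₂ => ψ₁.freeVars ∪ ψ₂.freeVars
  | .next ψ => ψ.freeVars
  | .untl ψ₁ ψ₂ => ψ₁.freeVars ∪ ψ₂.freeVars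

def HFormula.freeVars {AP : Type} : HFormula AP → Set ℕ
  | .ex x φ => φ.freeVars \ {x}
  | .all x φ => φ.freeVars \ {x}
  | .qf ψ => ψ.freeVars

/-- A sentence is a formula without free variables. -/
def HFormula.IsSentence {AP : Type} (φ : HFormula AP) : Prop := φ.freeVars = ∅

/-- `T` is a model of `φ` (for sentences the initial assignment is irrelevant). -/
def HModels {AP : Type} (T : Set (Trace AP)) (φ : HFormula AP) : Prop :=
  φ.sat T (fun _ _ => ∅)

/-- A HyperLTL sentence is satisfiable if it has a model. -/
def HSatisfiable {AP : Type} (φ : HFormula AP) : Prop := ∃ T, HModels T φ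

/-! ### Bounded, split sets of traces (the proposition `$` is `none`) -/

/-- A trace in `(2^AP)^b · {$}^ω`. -/
def LeftTr {AP : Type} (b : ℕ) (t : Trace (Option AP)) : Prop :=
  (∀ i < b, none ∉ t i) ∧ ∀ i, b ≤ i → t i = {none}

/-- A trace in `{$}^b · (2^AP)^ω`. -/
def RightTr {AP : Type} (b : ℕ) (t : Trace (Option AP)) : Prop :=
  (∀ i < b, t i = {none}) ∧ ∀ i, b ≤ i → none ∉ t i

/-- A nonempty set of traces is split at `b` if every trace belongs to either
the left part `(2^AP)^b · {$}^ω` or the right part `{$}^b · (2^AP)^ω`. -/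
def SplitAt {AP : Type} (T : Set (Trace (Option AP))) (b : ℕ) : Prop :=
  T.Nonempty ∧ ∀ t ∈ T, LeftTr b t ∨ RightTr b t

/-- The left part `T_ℓ` of a split set. -/
def leftPart {AP : Type} (T : Set (Trace (Option AP))) (b : ℕ) :
    Set (Trace (Option AP)) := {t | t ∈ T ∧ LeftTr b t}

/-- Prepending `b` letters `{$}` to a trace. -/
def dollarPre {AP : Type} (b : ℕ) (t : Trace (Option AP)) : Trace (Option AP) :=
  fun i => if i < b then {none} else t (i - b)

/-- The right part `T_r` of a split set: the traces in `(2^AP)^ω` whose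
`{$}^b`-prefixed version belongs to `T`. -/
def rightPart {AP : Type} (T : Set (Trace (Option AP))) (b : ℕ) :
    Set (Trace (Option AP)) :=
  {t | (∀ i, (none : Option AP) ∉ t i) ∧ dollarPre b t ∈ T}

/-!
Relativize the quantifiers of `φℓ` to the left traces and those of `φr` to the right traces,
using the guards `◇□$` and `◇□¬$`, which on a split set hold exactly of the left and of the
right traces. The right traces are the traces of `T_r` delayed by `b`; as every trace that the
matrix of `φr` speaks about is then a right trace, the matrix is read at position `b` through
`$_a U (¬$_a ∧ ·)` for any one of its variables `a`. After renaming bound variables apart, the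
two prenex sentences are combined by concatenating their prefixes and conjoining their
matrices, which is sound because sets of traces are nonempty here.
-/

variable {A : Type}

namespace QF

def conj (ψ₁ ψ₂ : QF A) : QF A := .neg (.disj (.neg ψ₁) (.neg ψ₂))

def impl (ψ₁ ψ₂ : QF A) : QF A := .disj (.neg ψ₁) ψ₂

@[simp] lemma sat_conj (ψ₁ ψ₂ : QF A) (As : ℕ → Trace A) :
    (ψ₁.conj ψ₂).sat As ↔ ψ₁.sat As ∧ ψ₂.sat As := by
  simp only [conj, sat, not_or, not_not]

@[simp] lemma sat_impl (ψ₁ ψ₂ : QF A) (As : ℕ → Trace A) :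
    (ψ₁.impl ψ₂).sat As ↔ (ψ₁.sat As → ψ₂.sat As) := by
  simp only [impl, sat, imp_iff_not_or]

@[simp] lemma freeVars_conj (ψ₁ ψ₂ : QF A) :
    (ψ₁.conj ψ₂).freeVars = ψ₁.freeVars ∪ ψ₂.freeVars := rfl

@[simp] lemma freeVars_impl (ψ₁ ψ₂ : QF A) :
    (ψ₁.impl ψ₂).freeVars = ψ₁.freeVars ∪ ψ₂.freeVars := rfl

lemma sat_congr {ψ : QF A} {As As' : ℕ → Trace A} (h : ∀ x ∈ ψ.freeVars, As x = As' x) :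
    ψ.sat As ↔ ψ.sat As' := by
  induction ψ generalizing As As' with
  | atom a x => simp only [sat, h x rfl]
  | neg ψ ih => exact not_congr (ih h)
  | disj ψ₁ ψ₂ ih₁ ih₂ =>
    exact or_congr (ih₁ fun x hx => h x (.inl hx)) (ih₂ fun x hx => h x (.inr hx))
  | next ψ ih => exact ih fun x hx => by simp only [shiftAsg, h x hx]
  | untl ψ₁ ψ₂ ih₁ ih₂ =>
    exact exists_congr fun j => and_congr
      (ih₂ fun x hx => by simp only [shiftAsg, h x (.inr hx)])
      (forall₂_congr fun _ _ => ih₁ fun x hx => by simp only [shiftAsg, h x (.inl hx)])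

lemma sat_update_of_notMem {ψ : QF A} {x : ℕ} (hx : x ∉ ψ.freeVars) (As : ℕ → Trace A)
    (t : Trace A) : ψ.sat (Function.update As x t) ↔ ψ.sat As :=
  sat_congr fun _ hy => Function.update_of_ne (ne_of_mem_of_not_mem hy hx) _ _

def mapVar (σ : ℕ → ℕ) : QF A → QF A
  | atom a x => atom a (σ x)
  | neg ψ => neg (ψ.mapVar σ)
  | disj ψ₁ ψ₂ => disj (ψ₁.mapVar σ) (ψ₂.mapVar σ)
  | next ψ => next (ψ.mapVar σ)
  | untl ψ₁ ψ₂ => untl (ψ₁.mapVar σ) (ψ₂.mapVar σ)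

lemma sat_mapVar (σ : ℕ → ℕ) (ψ : QF A) (As : ℕ → Trace A) :
    (ψ.mapVar σ).sat As ↔ ψ.sat (As ∘ σ) := by
  induction ψ generalizing As with
  | atom => rfl
  | neg ψ ih => exact not_congr (ih As)
  | disj ψ₁ ψ₂ ih₁ ih₂ => exact or_congr (ih₁ As) (ih₂ As)
  | next ψ ih => exact ih _
  | untl ψ₁ ψ₂ ih₁ ih₂ =>
    exact exists_congr fun j => and_congr (ih₂ _) (forall₂_congr fun _ _ => ih₁ _)

lemma freeVars_mapVar (σ : ℕ → ℕ) (ψ : QF A) : (ψ.mapVar σ).freeVars = σ '' ψ.freeVars := by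
  induction ψ with
  | atom => simp [mapVar, freeVars]
  | neg _ ih | next _ ih => exact ih
  | disj _ _ ih₁ ih₂ | untl _ _ ih₁ ih₂ => simp only [mapVar, freeVars, ih₁, ih₂, Set.image_union]

def firstVar : QF A → ℕ
  | atom _ x => x
  | neg ψ | next ψ => ψ.firstVar
  | disj ψ _ | untl ψ _ => ψ.firstVar

lemma firstVar_mem_freeVars (ψ : QF A) : ψ.firstVar ∈ ψ.freeVars := by
  induction ψ with
  | atom => rfl
  | neg _ ih | next _ ih => exact ih
  | disj _ _ ih _ | untl _ _ ih _ => exact .inl ih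

end QF

namespace HFormula

def boundVars : HFormula A → List ℕ
  | ex x φ | all x φ => x :: φ.boundVars
  | qf _ => []

def matrix : HFormula A → QF A
  | ex _ φ | all _ φ => φ.matrix
  | qf ψ => ψ

lemma freeVars_eq_diff (φ : HFormula A) :
    φ.freeVars = φ.matrix.freeVars \ {x | x ∈ φ.boundVars} := by
  induction φ with
  | ex x φ ih | all x φ ih =>
    ext y
    simp only [freeVars, matrix, boundVars, ih, Set.mem_sdiff, Set.mem_ofPred_eq, List.mem_cons,
      Set.mem_singleton_iff]
    tauto
  | qf ψ => simp [freeVars, matrix, boundVars]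

lemma isSentence_iff {φ : HFormula A} :
    φ.IsSentence ↔ ∀ x ∈ φ.matrix.freeVars, x ∈ φ.boundVars := by
  rw [IsSentence, freeVars_eq_diff, Set.sdiff_eq_empty]
  rfl

lemma IsSentence.notMem_freeVars {φ : HFormula A} (hφ : φ.IsSentence) (x : ℕ) :
    x ∉ φ.freeVars := by
  rw [show φ.freeVars = ∅ from hφ]
  exact Set.notMem_empty x

lemma sat_congr {φ : HFormula A} {T : Set (Trace A)} {As As' : ℕ → Trace A}
    (h : ∀ x ∈ φ.freeVars, As x = As' x) : φ.sat T As ↔ φ.sat T As' := by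
  have update_agree {x : ℕ} {Bs Bs' : ℕ → Trace A} {s : Set ℕ}
      (h : ∀ y ∈ s \ {x}, Bs y = Bs' y) (t : Trace A) :
      ∀ y ∈ s, Function.update Bs x t y = Function.update Bs' x t y := by
    intro y hy
    rcases eq_or_ne y x with rfl | hne
    · simp
    · simp only [Function.update_of_ne hne, h y ⟨hy, hne⟩]
  induction φ generalizing As As' with
  | ex x φ ih => exact exists_congr fun t => and_congr_right fun _ => ih (update_agree h t)
  | all x φ ih => exact forall₂_congr fun t _ => ih (update_agree h t)
  | qf ψ => exact QF.sat_congr h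

lemma sat_update_of_notMem {φ : HFormula A} {x : ℕ} (hx : x ∉ φ.freeVars) (T : Set (Trace A))
    (As : ℕ → Trace A) (t : Trace A) : φ.sat T (Function.update As x t) ↔ φ.sat T As :=
  sat_congr fun _ hy => Function.update_of_ne (ne_of_mem_of_not_mem hy hx) _ _

def mapLeaf (f : QF A → QF A) : HFormula A → HFormula A
  | ex x φ => ex x (φ.mapLeaf f)
  | all x φ => all x (φ.mapLeaf f)
  | qf ψ => qf (f ψ)

@[simp] lemma boundVars_mapLeaf (f : QF A → QF A) (φ : HFormula A) :
    (φ.mapLeaf f).boundVars = φ.boundVars := by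
  induction φ with
  | ex x φ ih | all x φ ih => simp only [mapLeaf, boundVars, ih]
  | qf => rfl

@[simp] lemma matrix_mapLeaf (f : QF A → QF A) (φ : HFormula A) :
    (φ.mapLeaf f).matrix = f φ.matrix := by
  induction φ with
  | ex x φ ih | all x φ ih => exact ih
  | qf => rfl

lemma sat_mapLeaf_conj {T : Set (Trace A)} (hT : T.Nonempty) {ψ : QF A} {φ : HFormula A}
    (hφ : ∀ x ∈ φ.boundVars, x ∉ ψ.freeVars) (As : ℕ → Trace A) :
    (φ.mapLeaf (ψ.conj ·)).sat T As ↔ ψ.sat As ∧ φ.sat T As := by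
  induction φ generalizing As with
  | ex x φ ih =>
    simp only [mapLeaf, sat, ih (fun y hy => hφ y (.tail _ hy)),
      QF.sat_update_of_notMem (hφ x (.head _))]
    exact ⟨fun ⟨t, ht, hψ, h⟩ => ⟨hψ, t, ht, h⟩, fun ⟨hψ, t, ht, h⟩ => ⟨t, ht, hψ, h⟩⟩
  | all x φ ih =>
    simp only [mapLeaf, sat, ih (fun y hy => hφ y (.tail _ hy)),
      QF.sat_update_of_notMem (hφ x (.head _))]
    obtain ⟨t₀, ht₀⟩ := hT
    exact ⟨fun h => ⟨(h t₀ ht₀).1, fun t ht => (h t ht).2⟩, fun h t ht => ⟨h.1, h.2 t ht⟩⟩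
  | qf => exact QF.sat_conj _ _ _

lemma sat_mapLeaf_impl {T : Set (Trace A)} (hT : T.Nonempty) {ψ : QF A} {φ : HFormula A}
    (hφ : ∀ x ∈ φ.boundVars, x ∉ ψ.freeVars) (As : ℕ → Trace A) :
    (φ.mapLeaf (ψ.impl ·)).sat T As ↔ (ψ.sat As → φ.sat T As) := by
  induction φ generalizing As with
  | ex x φ ih =>
    simp only [mapLeaf, sat, ih (fun y hy => hφ y (.tail _ hy)),
      QF.sat_update_of_notMem (hφ x (.head _))]
    obtain ⟨t₀, ht₀⟩ := hT
    by_cases hψ : ψ.sat As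
    · simp only [hψ, true_imp_iff]
    · exact iff_of_true ⟨t₀, ht₀, fun h => absurd h hψ⟩ fun h => absurd h hψ
  | all x φ ih =>
    simp only [mapLeaf, sat, ih (fun y hy => hφ y (.tail _ hy)),
      QF.sat_update_of_notMem (hφ x (.head _))]
    exact ⟨fun h hψ t ht => h t ht hψ, fun h t ht hψ => h hψ t ht⟩
  | qf => exact QF.sat_impl _ _ _

def merge : HFormula A → HFormula A → HFormula A
  | ex x φ, χ => ex x (φ.merge χ)
  | all x φ, χ => all x (φ.merge χ)
  | qf ψ, χ => χ.mapLeaf (ψ.conj ·)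

lemma boundVars_merge (φ χ : HFormula A) :
    (φ.merge χ).boundVars = φ.boundVars ++ χ.boundVars := by
  induction φ with
  | ex x φ ih | all x φ ih => simp only [merge, boundVars, ih, List.cons_append]
  | qf => simp [merge, boundVars]

lemma matrix_merge (φ χ : HFormula A) : (φ.merge χ).matrix = φ.matrix.conj χ.matrix := by
  induction φ with
  | ex x φ ih | all x φ ih => exact ih
  | qf => simp [merge, matrix]

lemma IsSentence.merge {φ χ : HFormula A} (hφ : φ.IsSentence) (hχ : χ.IsSentence) :
    (φ.merge χ).IsSentence := by
  rw [isSentence_iff] at *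
  simp only [matrix_merge, QF.freeVars_conj, boundVars_merge, List.mem_append]
  rintro x (hx | hx)
  exacts [.inl (hφ x hx), .inr (hχ x hx)]

lemma sat_merge {T : Set (Trace A)} (hT : T.Nonempty) {φ χ : HFormula A}
    (hχφ : ∀ x ∈ χ.boundVars, x ∉ φ.matrix.freeVars) (hφχ : ∀ x ∈ φ.boundVars, x ∉ χ.freeVars)
    (As : ℕ → Trace A) : (φ.merge χ).sat T As ↔ φ.sat T As ∧ χ.sat T As := by
  induction φ generalizing As with
  | ex x φ ih =>
    simp only [HFormula.merge, sat, ih hχφ (fun y hy => hφχ y (.tail _ hy)),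
      sat_update_of_notMem (hφχ x (.head _))]
    exact ⟨fun ⟨t, ht, h, hχ⟩ => ⟨⟨t, ht, h⟩, hχ⟩, fun ⟨⟨t, ht, h⟩, hχ⟩ => ⟨t, ht, h, hχ⟩⟩
  | all x φ ih =>
    simp only [HFormula.merge, sat, ih hχφ (fun y hy => hφχ y (.tail _ hy)),
      sat_update_of_notMem (hφχ x (.head _))]
    obtain ⟨t₀, ht₀⟩ := hT
    exact ⟨fun h => ⟨fun t ht => (h t ht).1, (h t₀ ht₀).2⟩, fun h t ht => ⟨h.1 t ht, h.2⟩⟩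
  | qf ψ => exact sat_mapLeaf_conj hT hχφ As

lemma models_merge {T : Set (Trace A)} (hT : T.Nonempty) {φ χ : HFormula A}
    (hφ : φ.IsSentence) (hχ : χ.IsSentence) (hd : φ.boundVars.Disjoint χ.boundVars) :
    HModels T (φ.merge χ) ↔ HModels T φ ∧ HModels T χ :=
  sat_merge hT (fun _ hx hm => hd (isSentence_iff.1 hφ _ hm) hx)
    (fun _ _ => hχ.notMem_freeVars _) _

def rename : HFormula A → (ℕ → ℕ) → ℕ → HFormula A
  | ex x φ, σ, k => ex k (φ.rename (Function.update σ x k) (k + 1))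
  | all x φ, σ, k => all k (φ.rename (Function.update σ x k) (k + 1))
  | qf ψ, σ, _ => qf (ψ.mapVar σ)

lemma boundVars_rename (φ : HFormula A) (σ : ℕ → ℕ) (k : ℕ) :
    (φ.rename σ k).boundVars = List.range' k φ.boundVars.length := by
  induction φ generalizing σ k with
  | ex x φ ih | all x φ ih => simp only [rename, boundVars, ih, List.length_cons, List.range'_succ]
  | qf => rfl

lemma sat_rename {T : Set (Trace A)} (φ : HFormula A) {σ : ℕ → ℕ} {k : ℕ} (hσ : ∀ y, σ y < k)
    (As : ℕ → Trace A) : (φ.rename σ k).sat T As ↔ φ.sat T (As ∘ σ) := by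
  have update_comp_update {σ : ℕ → ℕ} {k x : ℕ} (hσ : ∀ y, σ y < k) (As : ℕ → Trace A)
      (t : Trace A) :
      Function.update As k t ∘ Function.update σ x k = Function.update (As ∘ σ) x t := by
    rw [Function.comp_update, Function.update_self,
      Function.update_comp_eq_of_forall_ne _ _ fun y => (hσ y).ne]
  have lt_update {σ : ℕ → ℕ} {k : ℕ} (hσ : ∀ y, σ y < k) (x y : ℕ) :
      Function.update σ x k y < k + 1 := by
    rcases eq_or_ne y x with rfl | hne
    · simp
    · rw [Function.update_of_ne hne]; exact (hσ y).trans k.lt_succ_self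
  induction φ generalizing σ k As with
  | ex x φ ih | all x φ ih =>
    simp only [rename, sat, ih (lt_update hσ x), update_comp_update hσ]
  | qf ψ => exact QF.sat_mapVar σ ψ As

lemma freeVars_rename_subset (φ : HFormula A) (σ : ℕ → ℕ) (k : ℕ) :
    (φ.rename σ k).freeVars ⊆ σ '' φ.freeVars := by
  induction φ generalizing σ k with
  | ex x φ ih | all x φ ih =>
    rintro y ⟨hy, hyk⟩
    obtain ⟨z, hz, rfl⟩ := ih _ _ hy
    rcases eq_or_ne z x with rfl | hne
    · simp at hyk
    · rw [Function.update_of_ne hne] at hyk ⊢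
      exact ⟨z, ⟨hz, hne⟩, rfl⟩
  | qf ψ => exact (QF.freeVars_mapVar σ ψ).subset

lemma IsSentence.rename {φ : HFormula A} (hφ : φ.IsSentence) (σ : ℕ → ℕ) (k : ℕ) :
    (φ.rename σ k).IsSentence :=
  Set.subset_eq_empty (freeVars_rename_subset φ σ k) (by rw [hφ, Set.image_empty])

def relativize (g : ℕ → QF A) (f : QF A → QF A) : HFormula A → HFormula A
  | ex x φ => ex x ((φ.relativize g f).mapLeaf ((g x).conj ·))
  | all x φ => all x ((φ.relativize g f).mapLeaf ((g x).impl ·))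
  | qf ψ => qf (f ψ)

@[simp] lemma boundVars_relativize (g : ℕ → QF A) (f : QF A → QF A) (φ : HFormula A) :
    (φ.relativize g f).boundVars = φ.boundVars := by
  induction φ with
  | ex x φ ih | all x φ ih => simp only [relativize, boundVars, boundVars_mapLeaf, ih]
  | qf => rfl

lemma IsSentence.relativize {g : ℕ → QF A} {f : QF A → QF A}
    (hg : ∀ x, (g x).freeVars ⊆ {x}) (hf : ∀ ψ, (f ψ).freeVars ⊆ ψ.freeVars)
    {φ : HFormula A} (hφ : φ.IsSentence) : (φ.relativize g f).IsSentence := by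
  suffices h : ∀ φ : HFormula A,
      (φ.relativize g f).matrix.freeVars ⊆ φ.matrix.freeVars ∪ {x | x ∈ φ.boundVars} by
    rw [isSentence_iff] at *
    intro x hx
    rw [boundVars_relativize]
    exact (h φ hx).elim (hφ x) id
  intro φ
  induction φ with
  | ex x φ ih | all x φ ih =>
    simp only [HFormula.relativize, matrix_mapLeaf, QF.freeVars_conj, QF.freeVars_impl, matrix,
      boundVars]
    refine Set.union_subset ?_ (ih.trans ?_)
    · exact (hg x).trans fun y (hy : y = x) => .inr (hy ▸ List.mem_cons_self)
    · exact Set.union_subset_union_right _ fun y hy => List.mem_cons_of_mem x hy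
  | qf ψ => exact (hf ψ).trans Set.subset_union_left

lemma sat_relativize {T : Set (Trace A)} (hT : T.Nonempty) {g : ℕ → QF A}
    {f : QF A → QF A} {G : Trace A → Prop} {e : Trace A → Trace A}
    (hgfv : ∀ x, (g x).freeVars ⊆ {x})
    (hg : ∀ x As, As x ∈ T → ((g x).sat As ↔ G (As x)))
    (hf : ∀ ψ As, (∀ x ∈ ψ.freeVars, G (As x)) → ((f ψ).sat As ↔ ψ.sat (e ∘ As)))
    (φ : HFormula A) (hφ : φ.boundVars.Nodup) (As : ℕ → Trace A)
    (hAs : ∀ x ∈ φ.freeVars, G (As x)) :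
    (φ.relativize g f).sat T As ↔ φ.sat (e '' {t | t ∈ T ∧ G t}) (e ∘ As) := by
  induction φ generalizing As with
  | ex x φ ih | all x φ ih =>
    obtain ⟨hx, hφ⟩ := List.nodup_cons.1 hφ
    have hxg : ∀ y ∈ (φ.relativize g f).boundVars, y ∉ (g x).freeVars := fun y hy hyg => by
      rw [boundVars_relativize, Set.mem_singleton_iff.1 (hgfv x hyg)] at hy
      exact hx hy
    have guard (t : Trace A) (ht : t ∈ T) : (g x).sat (Function.update As x t) ↔ G t := by
      simpa using hg x (Function.update As x t) (by simpa using ht)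
    have body (t : Trace A) (ht : G t) : (φ.relativize g f).sat T (Function.update As x t) ↔
        φ.sat (e '' {t | t ∈ T ∧ G t}) (Function.update (e ∘ As) x (e t)) := by
      rw [← Function.comp_update]
      refine ih hφ _ fun y hy => ?_
      rcases eq_or_ne y x with rfl | hne
      · simpa using ht
      · simpa [Function.update_of_ne hne] using hAs y ⟨hy, hne⟩
    simp only [relativize, sat, sat_mapLeaf_conj hT hxg, sat_mapLeaf_impl hT hxg,
      Set.exists_mem_image, Set.forall_mem_image, Set.mem_ofPred_eq]
    constructor <;> grind
  | qf ψ => exact hf ψ As hAs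

end HFormula

namespace QF

/-- `◇ψ`, with `true` written as `a_x ∨ ¬a_x` for want of a constant. -/
def eventually (a : A) (x : ℕ) (ψ : QF A) : QF A := untl (disj (atom a x) (neg (atom a x))) ψ

def always (a : A) (x : ℕ) (ψ : QF A) : QF A := neg (eventually a x (neg ψ))

lemma sat_eventually (a : A) (x : ℕ) (ψ : QF A) (As : ℕ → Trace A) :
    (eventually a x ψ).sat As ↔ ∃ j, ψ.sat (shiftAsg As j) := by
  simp only [eventually, sat, em, implies_true, and_true]

lemma sat_always (a : A) (x : ℕ) (ψ : QF A) (As : ℕ → Trace A) :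
    (always a x ψ).sat As ↔ ∀ j, ψ.sat (shiftAsg As j) := by
  simp only [always, sat, sat_eventually, not_exists, not_not]

@[simp] lemma freeVars_eventually (a : A) (x : ℕ) (ψ : QF A) :
    (eventually a x ψ).freeVars = {x} ∪ ψ.freeVars := by
  simp [eventually, freeVars]

@[simp] lemma freeVars_always (a : A) (x : ℕ) (ψ : QF A) :
    (always a x ψ).freeVars = {x} ∪ ψ.freeVars :=
  freeVars_eventually a x ψ.neg

end QF

section Split

variable {P : Type} {T : Set (Trace (Option P))} {b : ℕ}

def leftGuard (x : ℕ) : QF (Option P) := .eventually none x (.always none x (.atom none x))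

def rightGuard (x : ℕ) : QF (Option P) := .eventually none x (.always none x (.neg (.atom none x)))

lemma freeVars_leftGuard (x : ℕ) : (leftGuard x : QF (Option P)).freeVars ⊆ {x} := by
  simp [leftGuard, QF.freeVars]

lemma freeVars_rightGuard (x : ℕ) : (rightGuard x : QF (Option P)).freeVars ⊆ {x} := by
  simp [rightGuard, QF.freeVars]

lemma sat_leftGuard (h : SplitAt T b) {As : ℕ → Trace (Option P)} {x : ℕ} (hx : As x ∈ T) :
    (leftGuard x).sat As ↔ LeftTr b (As x) := by
  simp only [leftGuard, QF.sat_eventually, QF.sat_always, QF.sat, shiftAsg, Trace.shift, zero_add]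
  constructor
  · rintro ⟨j, hj⟩
    exact (h.2 _ hx).resolve_right fun hR => hR.2 (b + j) (by omega) (hj b)
  · intro hL
    exact ⟨b, fun i => by rw [hL.2 (i + b) (by omega)]; rfl⟩

lemma sat_rightGuard (h : SplitAt T b) {As : ℕ → Trace (Option P)} {x : ℕ} (hx : As x ∈ T) :
    (rightGuard x).sat As ↔ RightTr b (As x) := by
  simp only [rightGuard, QF.sat_eventually, QF.sat_always, QF.sat, shiftAsg, Trace.shift, zero_add]
  constructor
  · rintro ⟨j, hj⟩
    refine (h.2 _ hx).resolve_left fun hL => hj b ?_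
    rw [hL.2 (b + j) (by omega)]
    rfl
  · intro hR
    exact ⟨b, fun i => hR.2 (i + b) (by omega)⟩

/-- On right traces, `$_a U (¬$_a ∧ ψ)` evaluates `ψ` at position `b`; any variable `a`
of `ψ` serves. -/
def QF.afterDollars (ψ : QF (Option P)) : QF (Option P) :=
  .untl (.atom none ψ.firstVar) ((QF.neg (.atom none ψ.firstVar)).conj ψ)

lemma QF.freeVars_afterDollars (ψ : QF (Option P)) : ψ.afterDollars.freeVars ⊆ ψ.freeVars := by
  simp only [afterDollars, freeVars, freeVars_conj, Set.union_subset_iff, Set.singleton_subset_iff,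
    subset_rfl, and_true]
  exact ⟨ψ.firstVar_mem_freeVars, ψ.firstVar_mem_freeVars⟩

lemma QF.sat_afterDollars {ψ : QF (Option P)} {As : ℕ → Trace (Option P)}
    (hψ : ∀ x ∈ ψ.freeVars, RightTr b (As x)) :
    ψ.afterDollars.sat As ↔ ψ.sat ((·.shift b) ∘ As) := by
  obtain ⟨hpre, hpost⟩ := hψ _ ψ.firstVar_mem_freeVars
  simp only [afterDollars, sat, sat_conj, shiftAsg, Trace.shift, zero_add]
  constructor
  · rintro ⟨j, ⟨hj, hψj⟩, hlt⟩
    obtain rfl : j = b := le_antisymm (not_lt.1 fun hjb => hpost b le_rfl (hlt b hjb))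
      (not_lt.1 fun hjb => hj (by rw [hpre j hjb]; rfl))
    exact hψj
  · exact fun hψb => ⟨b, ⟨hpost b le_rfl, hψb⟩, fun j hj => by rw [hpre j hj]; rfl⟩

lemma image_shift_rightTr :
    (·.shift b) '' {t | t ∈ T ∧ RightTr b t} = rightPart T b := by
  ext s
  constructor
  · rintro ⟨t, ⟨ht, hpre, hpost⟩, rfl⟩
    refine ⟨fun i => hpost (i + b) (by omega), ?_⟩
    convert ht using 1
    funext i
    by_cases hi : i < b
    · simp [dollarPre, hi, hpre i hi]
    · simp [dollarPre, hi, Trace.shift, Nat.sub_add_cancel (not_lt.1 hi)]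
  · rintro ⟨hs, hmem⟩
    refine ⟨dollarPre b s, ⟨hmem, fun i hi => by simp [dollarPre, hi], fun i hi => ?_⟩, ?_⟩
    · simpa [dollarPre, not_lt.2 hi] using hs (i - b)
    · funext i
      simp [Trace.shift, dollarPre]

end Split

section Combination

open HFormula

variable {P : Type}

def leftFormula (φ : HFormula (Option P)) : HFormula (Option P) :=
  (φ.rename (fun _ => 0) 1).relativize leftGuard id

def rightFormula (φ : HFormula (Option P)) (k : ℕ) : HFormula (Option P) :=
  (φ.rename (fun _ => 0) (k + 1)).relativize rightGuard QF.afterDollars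

lemma boundVars_leftFormula (φ : HFormula (Option P)) :
    (leftFormula φ).boundVars = List.range' 1 φ.boundVars.length := by
  rw [leftFormula, boundVars_relativize, boundVars_rename]

lemma boundVars_rightFormula (φ : HFormula (Option P)) (k : ℕ) :
    (rightFormula φ k).boundVars = List.range' (k + 1) φ.boundVars.length := by
  rw [rightFormula, boundVars_relativize, boundVars_rename]

lemma HFormula.IsSentence.leftFormula {φ : HFormula (Option P)} (hφ : φ.IsSentence) :
    (leftFormula φ).IsSentence :=
  (hφ.rename _ _).relativize freeVars_leftGuard fun _ => subset_rfl

lemma HFormula.IsSentence.rightFormula {φ : HFormula (Option P)} (hφ : φ.IsSentence) (k : ℕ) :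
    (rightFormula φ k).IsSentence :=
  (hφ.rename _ _).relativize freeVars_rightGuard QF.freeVars_afterDollars

lemma models_leftFormula {T : Set (Trace (Option P))} {b : ℕ} (h : SplitAt T b)
    {φ : HFormula (Option P)} (hφ : φ.IsSentence) :
    HModels T (leftFormula φ) ↔ HModels (leftPart T b) φ := by
  have hnd : (φ.rename (fun _ => 0) 1).boundVars.Nodup := by
    rw [boundVars_rename]; exact List.nodup_range'
  rw [HModels, leftFormula, sat_relativize (f := id) (e := id) h.1 freeVars_leftGuard
    (fun _ _ => sat_leftGuard h) (fun _ _ _ => Iff.rfl) _ hnd _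
    fun x hx => ((hφ.rename _ _).notMem_freeVars x hx).elim,
    Set.image_id, sat_rename _ fun _ => Nat.one_pos]
  rfl

lemma models_rightFormula {T : Set (Trace (Option P))} {b : ℕ} (h : SplitAt T b)
    {φ : HFormula (Option P)} (hφ : φ.IsSentence) (k : ℕ) :
    HModels T (rightFormula φ k) ↔ HModels (rightPart T b) φ := by
  have hnd : (φ.rename (fun _ => 0) (k + 1)).boundVars.Nodup := by
    rw [boundVars_rename]; exact List.nodup_range'
  rw [HModels, rightFormula, sat_relativize h.1 freeVars_rightGuard
    (fun _ _ => sat_rightGuard h) (fun _ _ => QF.sat_afterDollars) _ hnd _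
    fun x hx => ((hφ.rename _ _).notMem_freeVars x hx).elim,
    image_shift_rightTr, sat_rename _ fun _ => Nat.succ_pos k]
  rfl

end Combination

theorem split_combination_general (AP : Type)
    (φl φr : HFormula (Option AP)) (hl : φl.IsSentence) (hr : φr.IsSentence) :
    ∃ ψ : HFormula (Option AP), ψ.IsSentence ∧
      ∀ (T : Set (Trace (Option AP))) (b : ℕ), SplitAt T b →
        ((HModels (leftPart T b) φl ∧ HModels (rightPart T b) φr) ↔ HModels T ψ) := by
  set n := φl.boundVars.length
  have hdisj : (leftFormula φl).boundVars.Disjoint (rightFormula φr n).boundVars := by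
    intro x hxl hxr
    rw [boundVars_leftFormula, List.mem_range'_1] at hxl
    rw [boundVars_rightFormula, List.mem_range'_1] at hxr
    omega
  refine ⟨(leftFormula φl).merge (rightFormula φr n), hl.leftFormula.merge (hr.rightFormula n),
    fun T b h => ?_⟩
  rw [HFormula.models_merge h.1 hl.leftFormula (hr.rightFormula n) hdisj, models_leftFormula h hl,
    models_rightFormula h hr]

/-- **Combining specifications of the two parts of a split model**: for all
HyperLTL sentences `φℓ` and `φr` there is a sentence `ψ` such that a split set
`T` satisfies `ψ` iff `T_ℓ ⊨ φℓ` and `T_r ⊨ φr`. -/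
theorem split_combination (AP : Type) [Fintype AP]
    (φl φr : HFormula (Option AP)) (hl : φl.IsSentence) (hr : φr.IsSentence) :
    ∃ ψ : HFormula (Option AP), ψ.IsSentence ∧
      ∀ (T : Set (Trace (Option AP))) (b : ℕ), SplitAt T b →
        ((HModels (leftPart T b) φl ∧ HModels (rightPart T b) φr) ↔ HModels T ψ) :=
  split_combination_general AP φl φr hl hr
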